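/- Let U:ℝ^m→ℝ be upper semicontinuous, α>0 and r∈ℝ^m. Suppose (s,A) is a limiting superjet of the function z' ↦ R^α[U](z',r) at a point z, witnessed by sequences z_n→z and (s_n,A_n)→(s,A) with (s_n,A_n) a superjet of R^α[U](·,r) at z_n and R^α[U](z_n,r) → R^α[U](z,r), and suppose that for each n the supremum defining R^α[U](z_n,r) is attained at some z̄_n with |z̄_n−z_n|<1. Then (s,A) is a limiting superjet of U at the point z̄ := z + α(s−r). -/

import Mathlib

set_option maxHeartbeats 1000000


open scoped RealInnerProductSpace
open Filter Metric MeasureTheory Topology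

/-- Sup-convolution `R^α[U](z,r)`. -/
noncomputable def Rsup {m : ℕ} (U : EuclideanSpace ℝ (Fin m) → ℝ) (α : ℝ)
    (z r : EuclideanSpace ℝ (Fin m)) : ℝ :=
  sSup ((fun Z => U Z - ⟪r, Z - z⟫ - ‖Z - z‖ ^ 2 / (2 * α)) '' closedBall z 1)

/-- The quadratic form `z ↦ ⟨Az, z⟩` of a matrix `A`. -/
noncomputable def quadF {d : ℕ} (A : Matrix (Fin d) (Fin d) ℝ)
    (z : EuclideanSpace ℝ (Fin d)) : ℝ :=
  ⟪Matrix.toEuclideanLin A z, z⟫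

/-- `(p, A)` is a superjet of `u` at `x`. -/
def IsSuperjet {d : ℕ} (u : EuclideanSpace ℝ (Fin d) → ℝ) (x p : EuclideanSpace ℝ (Fin d))
    (A : Matrix (Fin d) (Fin d) ℝ) : Prop :=
  ∀ ε > 0, ∀ᶠ z in 𝓝 (0 : EuclideanSpace ℝ (Fin d)),
    u (x + z) ≤ u x + ⟪p, z⟫ + (1 / 2) * quadF A z + ε * ‖z‖ ^ 2

/-- `(p, A)` is a limiting superjet of `u` at `x`. -/
def IsLimSuperjet {d : ℕ} (u : EuclideanSpace ℝ (Fin d) → ℝ) (x p : EuclideanSpace ℝ (Fin d))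
    (A : Matrix (Fin d) (Fin d) ℝ) : Prop :=
  ∃ (xn pn : ℕ → EuclideanSpace ℝ (Fin d)) (An : ℕ → Matrix (Fin d) (Fin d) ℝ),
    (∀ n, IsSuperjet u (xn n) (pn n) (An n)) ∧
    Tendsto xn atTop (𝓝 x) ∧ Tendsto pn atTop (𝓝 p) ∧ Tendsto An atTop (𝓝 A) ∧
    Tendsto (fun n => u (xn n)) atTop (𝓝 (u x))

lemma usc_bddAbove {X : Type*} [TopologicalSpace X] {f : X → ℝ}
    (hf : UpperSemicontinuous f) {K : Set X} (hK : IsCompact K) :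
    BddAbove (f '' K) := by
  obtain ⟨t, htK, hcov⟩ := hK.elim_nhds_subcover (fun x => {y | f y < f x + 1})
    (fun x _ => hf x (f x + 1) (by linarith))
  obtain ⟨b, hb⟩ := ((t : Set X).toFinite.image (fun x => f x + 1)).bddAbove
  refine ⟨b, ?_⟩
  rintro _ ⟨y, hy, rfl⟩
  obtain ⟨x, hxt, hx⟩ := Set.mem_iUnion₂.1 (hcov hy)
  exact le_trans (le_of_lt hx) (hb ⟨x, hxt, rfl⟩)

lemma le_Rsup {m : ℕ} (U : EuclideanSpace ℝ (Fin m) → ℝ) (hU : UpperSemicontinuous U)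
    (α : ℝ) (r z' Z : EuclideanSpace ℝ (Fin m)) (hZ : ‖Z - z'‖ ≤ 1) :
    U Z - ⟪r, Z - z'⟫ - ‖Z - z'‖ ^ 2 / (2 * α) ≤ Rsup U α z' r := by
  have hbdd : BddAbove
      ((fun Z => U Z - ⟪r, Z - z'⟫ - ‖Z - z'‖ ^ 2 / (2 * α)) '' closedBall z' 1) := by
    apply usc_bddAbove ?_ (isCompact_closedBall z' 1)
    have hc : Continuous fun Z : EuclideanSpace ℝ (Fin m) =>
        -⟪r, Z - z'⟫ - ‖Z - z'‖ ^ 2 / (2 * α) := by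
      apply Continuous.sub
      · exact (continuous_const.inner (continuous_id.sub continuous_const)).neg
      · exact (((continuous_id.sub continuous_const).norm.pow 2)).div_const _
    have h2 := hU.add hc.upperSemicontinuous
    convert h2 using 2 with Z
    · rfl
    · rfl
    · ring
  exact le_csSup hbdd (Set.mem_image_of_mem _ (mem_closedBall_iff_norm.2 hZ))

lemma quadF_smul {d : ℕ} (A : Matrix (Fin d) (Fin d) ℝ) (t : ℝ)
    (v : EuclideanSpace ℝ (Fin d)) : quadF A (t • v) = t ^ 2 * quadF A v := by
  unfold quadF
  rw [LinearMap.map_smul, real_inner_smul_left, real_inner_smul_right]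
  ring

/-- if `(s,A)` is a limiting superjet of `R^α[U](·,r)` at `z`, witnessed by
superjets `(s_n,A_n)` at `z_n` with interior attainment points `z̄_n`, then `(s,A)` is a
limiting superjet of `U` at `z̄ := z + α(s−r)`. -/
theorem statement4 {m : ℕ} (U : EuclideanSpace ℝ (Fin m) → ℝ)
    (hU : UpperSemicontinuous U) (α : ℝ) (hα : 0 < α)
    (r z s : EuclideanSpace ℝ (Fin m)) (A : Matrix (Fin m) (Fin m) ℝ) (hA : A.IsSymm)
    (zn sn : ℕ → EuclideanSpace ℝ (Fin m)) (An : ℕ → Matrix (Fin m) (Fin m) ℝ)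
    (hzn : Tendsto zn atTop (𝓝 z)) (hsn : Tendsto sn atTop (𝓝 s))
    (hAn : Tendsto An atTop (𝓝 A))
    (hjets : ∀ n, IsSuperjet (fun z' => Rsup U α z' r) (zn n) (sn n) (An n))
    (hval : Tendsto (fun n => Rsup U α (zn n) r) atTop (𝓝 (Rsup U α z r)))
    (hatt : ∀ n, ∃ zmn : EuclideanSpace ℝ (Fin m), ‖zmn - zn n‖ < 1 ∧
      Rsup U α (zn n) r = U zmn - ⟪r, zmn - zn n⟫ - ‖zmn - zn n‖ ^ 2 / (2 * α)) :
    IsLimSuperjet U (z + α • (s - r)) s A := by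
  choose zm hlt heq using hatt
  set β : ℝ := (2 * α)⁻¹ with hβdef
  have hβ : 0 < β := by positivity
  have hαβ : α⁻¹ = 2 * β := by
    rw [hβdef, mul_inv]
    ring
  -- gradient identity
  have hgrad : ∀ n, zm n = zn n + α • (sn n - r) := by
    intro n
    set d := zm n - zn n with hd
    set v := r + α⁻¹ • d - sn n with hv
    have hd1 : ‖d‖ < 1 := hlt n
    have hv0 : v = 0 := by
      by_contra hne
      have hnv : 0 < ‖v‖ := norm_pos_iff.2 hne
      set C : ℝ := (1 / 2) * quadF (An n) v + ‖v‖ ^ 2 + ‖v‖ ^ 2 * β with hC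
      have key : ∀ᶠ t in 𝓝[>] (0 : ℝ), ‖v‖ ^ 2 ≤ t * C := by
        have h1 := hjets n 1 one_pos
        rw [Metric.eventually_nhds_iff] at h1
        obtain ⟨δ, hδ, hball⟩ := h1
        have ht0 : 0 < min δ (1 - ‖d‖) / (‖v‖ + 1) := by
          apply div_pos (lt_min hδ (by linarith)) (by linarith)
        filter_upwards [Ioo_mem_nhdsGT_of_mem ⟨le_refl (0 : ℝ), ht0⟩] with t ht
        obtain ⟨htpos, htlt⟩ := ht
        have htv : t * (‖v‖ + 1) < min δ (1 - ‖d‖) := by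
          rw [lt_div_iff₀ (by linarith : (0:ℝ) < ‖v‖ + 1)] at htlt
          exact htlt
        have hnh : ‖t • v‖ ≤ t * (‖v‖ + 1) := by
          rw [norm_smul, Real.norm_eq_abs, abs_of_pos htpos]
          nlinarith
        -- upper bound from superjet
        have hup := hball (y := t • v) (by
          rw [dist_zero_right]
          exact lt_of_le_of_lt hnh (lt_of_lt_of_le htv (min_le_left _ _)))
        -- lower bound from attainment point
        have hmem : ‖zm n - (zn n + t • v)‖ ≤ 1 := by
          have : zm n - (zn n + t • v) = d - t • v := by rw [hd]; abel
          rw [this]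
          calc ‖d - t • v‖ ≤ ‖d‖ + ‖t • v‖ := norm_sub_le _ _
            _ ≤ ‖d‖ + t * (‖v‖ + 1) := by linarith
            _ ≤ ‖d‖ + (1 - ‖d‖) := by
                have := lt_of_lt_of_le htv (min_le_right _ _); linarith
            _ = 1 := by ring
        have hlow := le_Rsup U hU α r (zn n + t • v) (zm n) hmem
        have hsubeq : zm n - (zn n + t • v) = d - t • v := by rw [hd]; abel
        rw [hsubeq] at hlow
        -- combine
        have hchain : U (zm n) - ⟪r, d - t • v⟫ - ‖d - t • v‖ ^ 2 / (2 * α) ≤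
            U (zm n) - ⟪r, d⟫ - ‖d‖ ^ 2 / (2 * α) + ⟪sn n, t • v⟫
              + (1 / 2) * quadF (An n) (t • v) + 1 * ‖t • v‖ ^ 2 := by
          calc U (zm n) - ⟪r, d - t • v⟫ - ‖d - t • v‖ ^ 2 / (2 * α)
              ≤ Rsup U α (zn n + t • v) r := hlow
            _ ≤ Rsup U α (zn n) r + ⟪sn n, t • v⟫ + (1 / 2) * quadF (An n) (t • v)
                + 1 * ‖t • v‖ ^ 2 := hup
            _ = U (zm n) - ⟪r, d⟫ - ‖d‖ ^ 2 / (2 * α) + ⟪sn n, t • v⟫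
                + (1 / 2) * quadF (An n) (t • v) + 1 * ‖t • v‖ ^ 2 := by
                rw [heq n]
        -- expand
        have e1 : ⟪r, d - t • v⟫ = ⟪r, d⟫ - t * ⟪r, v⟫ := by
          rw [inner_sub_right, real_inner_smul_right]
        have e2 : ‖d - t • v‖ ^ 2 = ‖d‖ ^ 2 - 2 * (t * ⟪d, v⟫) + t ^ 2 * ‖v‖ ^ 2 := by
          rw [norm_sub_sq_real, real_inner_smul_right, norm_smul, Real.norm_eq_abs,
            mul_pow, sq_abs]
        have e3 : quadF (An n) (t • v) = t ^ 2 * quadF (An n) v := quadF_smul _ _ _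
        have e4 : ⟪sn n, t • v⟫ = t * ⟪sn n, v⟫ := real_inner_smul_right _ _ _
        have e5 : ‖t • v‖ ^ 2 = t ^ 2 * ‖v‖ ^ 2 := by
          rw [norm_smul, Real.norm_eq_abs, mul_pow, sq_abs]
        have eN : ‖v‖ ^ 2 = ⟪r, v⟫ + 2 * β * ⟪d, v⟫ - ⟪sn n, v⟫ := by
          rw [← real_inner_self_eq_norm_sq]
          nth_rewrite 1 [hv]
          rw [inner_sub_left, inner_add_left, real_inner_smul_left, hαβ]
        rw [e1, e2, e3, e4, e5] at hchain
        have hdivβ : ∀ x : ℝ, x / (2 * α) = x * β := fun x => by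
          rw [hβdef, div_eq_mul_inv]
        rw [hdivβ, hdivβ] at hchain
        -- now linear arithmetic in the monomials
        have step : t * ‖v‖ ^ 2 ≤ t * (t * C) := by
          have h6 : t * ‖v‖ ^ 2 = t * ⟪r, v⟫ + 2 * β * (t * ⟪d, v⟫) - t * ⟪sn n, v⟫ := by
            rw [eN]; ring
          rw [hC]
          ring_nf at hchain h6 ⊢
          nlinarith [hchain, h6]
        exact le_of_mul_le_mul_left step htpos
      have hC0 : Tendsto (fun t : ℝ => t * C) (𝓝[>] 0) (𝓝 0) := by
        have : Tendsto (fun t : ℝ => t * C) (𝓝 0) (𝓝 (0 * C)) :=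
          (continuous_id.mul continuous_const).tendsto 0
        rw [zero_mul] at this
        exact this.mono_left nhdsWithin_le_nhds
      have : ‖v‖ ^ 2 ≤ 0 := ge_of_tendsto hC0 key
      nlinarith
    have hsv : sn n = r + α⁻¹ • d := by
      have : r + α⁻¹ • d - sn n = 0 := hv0
      linear_combination (norm := module) -this
    rw [hsv]
    have : α • (r + α⁻¹ • d - r) = d := by
      rw [add_sub_cancel_left, smul_smul, mul_inv_cancel₀ (ne_of_gt hα), one_smul]
    rw [this, hd]
    abel
  -- superjets of U at zm n
  have hjetsU : ∀ n, IsSuperjet U (zm n) (sn n) (An n) := by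
    intro n ε hε
    have hd1 : ‖zm n - zn n‖ < 1 := hlt n
    have hκ : (0:ℝ) < 1 - ‖zm n - zn n‖ := by linarith
    filter_upwards [hjets n ε hε, Metric.ball_mem_nhds (0 : EuclideanSpace ℝ (Fin m)) hκ]
      with h h1 h2
    rw [mem_ball_zero_iff] at h2
    have hmem : ‖zm n + h - (zn n + h)‖ ≤ 1 := by
      have : zm n + h - (zn n + h) = zm n - zn n := by abel
      rw [this]; linarith
    have hlow := le_Rsup U hU α r (zn n + h) (zm n + h) hmem
    have hsubeq : zm n + h - (zn n + h) = zm n - zn n := by abel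
    rw [hsubeq] at hlow
    linarith [hlow, h1, heq n]
  -- limits
  have hdn : Tendsto (fun n => α • (sn n - r)) atTop (𝓝 (α • (s - r))) :=
    ((hsn.sub tendsto_const_nhds).const_smul α)
  have hzm_eq : zm = fun n => zn n + α • (sn n - r) := funext hgrad
  have hzmz : Tendsto zm atTop (𝓝 (z + α • (s - r))) := by
    rw [hzm_eq]; exact hzn.add hdn
  -- value convergence
  obtain ⟨L, hL⟩ : ∃ L : ℝ, L = Rsup U α z r + ⟪r, α • (s - r)⟫
      + ‖α • (s - r)‖ ^ 2 / (2 * α) := ⟨_, rfl⟩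
  have hUzm : Tendsto (fun n => U (zm n)) atTop (𝓝 L) := by
    have heq2 : ∀ n, U (zm n) = Rsup U α (zn n) r + ⟪r, α • (sn n - r)⟫
        + ‖α • (sn n - r)‖ ^ 2 / (2 * α) := by
      intro n
      have h3 := heq n
      have h4 : zm n - zn n = α • (sn n - r) := by rw [hgrad n]; abel
      rw [h4] at h3
      linarith
    rw [hL]
    exact ((hval.add ((tendsto_const_nhds.inner hdn))).add
      (((hdn.norm.pow 2)).div_const _)).congr fun n => (heq2 n).symm
  have hnorm_le : ‖α • (s - r)‖ ≤ 1 := by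
    have h5 : ∀ n, ‖α • (sn n - r)‖ ≤ 1 := by
      intro n
      have h4 : zm n - zn n = α • (sn n - r) := by rw [hgrad n]; abel
      rw [← h4]; exact (hlt n).le
    exact le_of_tendsto hdn.norm (Eventually.of_forall h5)
  have hzbar_sub : z + α • (s - r) - z = α • (s - r) := by abel
  have hLU : L = U (z + α • (s - r)) := by
    have hge : U (z + α • (s - r)) ≤ L := by
      have := le_Rsup U hU α r z (z + α • (s - r)) (by rw [hzbar_sub]; exact hnorm_le)
      rw [hzbar_sub] at this
      rw [hL]; linarith
    have hle2 : L ≤ U (z + α • (s - r)) := by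
      by_contra hcon
      push_neg at hcon
      have h2 := hU (z + α • (s - r)) ((U (z + α • (s - r)) + L) / 2) (by linarith)
      have h3 : ∀ᶠ n in atTop, U (zm n) < (U (z + α • (s - r)) + L) / 2 :=
        hzmz.eventually h2
      have h4 : L ≤ (U (z + α • (s - r)) + L) / 2 :=
        le_of_tendsto hUzm (h3.mono fun n hn => hn.le)
      linarith
    linarith
  rw [hLU] at hUzm
  exact ⟨zm, sn, An, hjetsU, hzmz, hsn, hAn, hUzm⟩
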